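/- arXiv:2006.12688 — 2 statements merged into one kernel-verified Lean document; each statement's English description precedes it below -/
import Mathlib

section
/- Let 𝒰 be a universe. A set O is the set of all 𝒰-ordinals if and only if: (i) ∅ ∈ O whenever 𝒰 ≠ ∅, and O ⊆ 𝒰; (ii) O is a transitive set; (iii) O is an ordinal system relative to 𝒰 under the relation x ⋸ y ⇔ (x ∈ y or x = y). Moreover, when these conditions hold, the incremented join of any X ∈ P_𝒰(O) is given by ⋁⁺X = (⋃X) ∪ X. -/
namespace Paper

/-- The union `⋃_{i ∈ I} f(i)` of the values of `f` on elements of `I`. -/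
noncomputable def unionImage (f : ZFSet → ZFSet) (I : ZFSet) : ZFSet :=
  ZFSet.sUnion (@ZFSet.image f (Classical.allZFSetDefinable _) I)

/-- A universe: a transitive set closed under pairing and under unions of
`𝒰`-indexed families of elements of `𝒰`. -/
def IsUniverse (U : ZFSet) : Prop :=
  U.IsTransitive ∧
  (∀ x ∈ U, ∀ y ∈ U, ({x, y} : ZFSet) ∈ U) ∧
  (∀ I ∈ U, ∀ f : ZFSet → ZFSet, (∀ i ∈ I, f i ∈ U) → unionImage f I ∈ U)

variable {X : Type*}

/-- `A ∈ P_𝒰(X)`: the subset `A` of the type `X` is in bijection with some element of `𝒰`. -/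
def SmallSet (U : ZFSet) (A : Set X) : Prop :=
  ∃ B : ZFSet, B ∈ U ∧ Nonempty (A ≃ B.toSet)

/-- `x < y` in the sense `x ≤ y ∧ x ≠ y`, for an arbitrary relation `le`. -/
def ltR (le : X → X → Prop) (x y : X) : Prop := le x y ∧ x ≠ y

/-- The lower complement `S^↧ = {x | ∀ y ∈ S, x < y}`. -/
def lowerComp (le : X → X → Prop) (S : Set X) : Set X := {x | ∀ y ∈ S, ltR le x y}

/-- The upper complement `S^↑ = {x | ∀ y ∈ S, y < x}`. -/
def upperComp (le : X → X → Prop) (S : Set X) : Set X := {x | ∀ y ∈ S, ltR le y x}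

/-- `b` is the incremented join `⋁⁺S`, i.e. the minimum of `S^↑`. -/
def IsIncJoin (le : X → X → Prop) (S : Set X) (b : X) : Prop :=
  b ∈ upperComp le S ∧ ∀ c ∈ upperComp le S, le b c

/-- `b = x⁺`, i.e. `b = ⋁⁺{x}`. -/
def IsSuccOf (le : X → X → Prop) (x b : X) : Prop := IsIncJoin le {x} b

/-- `b` is the join (least upper bound) of `S`. -/
def IsJoin (le : X → X → Prop) (S : Set X) (b : X) : Prop :=
  (∀ y ∈ S, le y b) ∧ ∀ c, (∀ y ∈ S, le y c) → le b c

/-- An ordinal system relative to the universe `U`: a partial order satisfying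
(O1) lower complements of nonempty subsets lie in `P_𝒰(X)`, and
(O2) every member of `P_𝒰(X)` has an incremented join. -/
def IsOrdinalSystem (U : ZFSet) (le : X → X → Prop) : Prop :=
  IsPartialOrder X le ∧
  (∀ S : Set X, S.Nonempty → SmallSet U (lowerComp le S)) ∧
  (∀ S : Set X, SmallSet U S → ∃ b, IsIncJoin le S b)

/-- The restricted power set `P_𝒰(X)` at the level of `ZFSet`s. -/
def RestrictedPower (U X : ZFSet) : Set ZFSet :=
  {A | A ⊆ X ∧ ∃ B : ZFSet, B ∈ U ∧ Nonempty (A.toSet ≃ B.toSet)}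

/-- The relation `x ⋸ y ⇔ (x ∈ y ∨ x = y)`. -/
def meq (x y : ZFSet) : Prop := x ∈ y ∨ x = y

/-- `x` is well-ordered by the relation `le`: `le` restricts to a partial order
on the elements of `x`, and every nonempty collection of elements of `x` has a
least element. -/
def WellOrderedBy (le : ZFSet → ZFSet → Prop) (x : ZFSet) : Prop :=
  (∀ a ∈ x, le a a) ∧
  (∀ a ∈ x, ∀ b ∈ x, le a b → le b a → a = b) ∧
  (∀ a ∈ x, ∀ b ∈ x, ∀ c ∈ x, le a b → le b c → le a c) ∧
  (∀ S : Set ZFSet, S ⊆ x.toSet → S.Nonempty → ∃ m ∈ S, ∀ y ∈ S, le m y)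

/-- A `𝒰`-ordinal: a transitive element of `𝒰` well-ordered by `⋸`. -/
def IsUOrdinal (U x : ZFSet) : Prop :=
  x ∈ U ∧ x.IsTransitive ∧ WellOrderedBy meq x


/-! ### Auxiliary lemmas -/

section Aux

variable {U : ZFSet}

lemma mem_unionImage {f : ZFSet → ZFSet} {I z : ZFSet} :
    z ∈ unionImage f I ↔ ∃ i ∈ I, z ∈ f i := by
  unfold unionImage
  rw [ZFSet.mem_sUnion]
  constructor
  · rintro ⟨w, hw, hz⟩
    rw [@ZFSet.mem_image f (Classical.allZFSetDefinable _)] at hw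
    obtain ⟨i, hi, rfl⟩ := hw
    exact ⟨i, hi, hz⟩
  · rintro ⟨i, hi, hz⟩
    exact ⟨f i, (@ZFSet.mem_image f (Classical.allZFSetDefinable _) _ _).2 ⟨i, hi, rfl⟩, hz⟩

lemma IsUniverse.empty_mem (hU : IsUniverse U) (hne : U ≠ ∅) : (∅ : ZFSet) ∈ U := by
  obtain ⟨x, hx⟩ := (ZFSet.eq_empty_or_nonempty U).resolve_left hne
  revert hx
  induction x using ZFSet.inductionOn with
  | _ x IH =>
    intro hx
    rcases ZFSet.eq_empty_or_nonempty x with rfl | ⟨y, hy⟩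
    · exact hx
    · exact IH y hy (hU.1 x hx hy)

lemma IsUniverse.singleton_mem (hU : IsUniverse U) {x : ZFSet} (hx : x ∈ U) :
    ({x} : ZFSet) ∈ U := by
  have h := hU.2.1 x hx x hx
  have he : ({x, x} : ZFSet) = {x} := by
    ext z
    simp [ZFSet.mem_pair]
  rwa [he] at h

lemma IsUniverse.mem_of_subset (hU : IsUniverse U) {A B : ZFSet} (hAB : A ⊆ B) (hB : B ∈ U) :
    A ∈ U := by
  classical
  have hemp : (∅ : ZFSet) ∈ U :=
    hU.empty_mem (by rintro rfl; exact ZFSet.notMem_empty _ hB)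
  have key : unionImage (fun i => if i ∈ A then ({i} : ZFSet) else ∅) B = A := by
    ext z
    rw [mem_unionImage]
    constructor
    · rintro ⟨i, hi, hz⟩
      by_cases h : i ∈ A
      · rw [if_pos h, ZFSet.mem_singleton] at hz
        rwa [hz]
      · rw [if_neg h] at hz
        exact absurd hz (ZFSet.notMem_empty z)
    · intro hz
      exact ⟨z, hAB hz, by rw [if_pos hz]; exact ZFSet.mem_singleton.2 rfl⟩
  rw [← key]
  refine hU.2.2 B hB _ (fun i hi => ?_)
  by_cases h : i ∈ A
  · rw [if_pos h]; exact hU.singleton_mem (hU.1 B hB hi)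
  · rw [if_neg h]; exact hemp

lemma IsUniverse.sUnion_mem (hU : IsUniverse U) {X : ZFSet} (hX : X ∈ U) :
    ZFSet.sUnion X ∈ U := by
  have key : unionImage id X = ZFSet.sUnion X := by
    ext z
    rw [mem_unionImage, ZFSet.mem_sUnion]
    rfl
  rw [← key]
  exact hU.2.2 X hX _ (fun i hi => hU.1 X hX hi)

lemma IsUniverse.union_mem (hU : IsUniverse U) {a b : ZFSet} (ha : a ∈ U) (hb : b ∈ U) :
    a ∪ b ∈ U := by
  rw [← ZFSet.sUnion_pair]
  exact hU.sUnion_mem (hU.2.1 a ha b hb)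

/-! ### meq basics -/

lemma meq_refl (x : ZFSet) : meq x x := Or.inr rfl

lemma meq_antisymm {a b : ZFSet} (h1 : meq a b) (h2 : meq b a) : a = b := by
  rcases h1 with h1 | h1
  · rcases h2 with h2 | h2
    · exact absurd h1 (ZFSet.mem_asymm h2)
    · exact h2.symm
  · exact h1

lemma meq_trans_of_transitive {a b c : ZFSet} (hc : c.IsTransitive)
    (h1 : meq a b) (h2 : meq b c) : meq a c := by
  rcases h1 with h1 | rfl
  · rcases h2 with h2 | rfl
    · exact Or.inl (hc.mem_trans h1 h2)
    · exact Or.inl h1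
  · exact h2

lemma ltR_subtype {O : ZFSet} {a b : O.toSet} :
    ltR (fun a b : O.toSet => meq a.1 b.1) a b ↔ a.1 ∈ b.1 := by
  constructor
  · rintro ⟨h | h, hne⟩
    · exact h
    · exact absurd (Subtype.ext h) hne
  · intro h
    exact ⟨Or.inl h, fun e => ZFSet.mem_irrefl b.1 (by rw [e] at h; exact h)⟩

/-! ### U-ordinals -/

lemma IsUOrdinal.comparable {x a b : ZFSet} (hx : IsUOrdinal U x)
    (ha : a ∈ x) (hb : b ∈ x) : meq a b ∨ meq b a := by
  obtain ⟨m, hm, hmle⟩ := hx.2.2.2.2.2 {a, b}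
    (by rintro z (rfl | rfl) <;> assumption) ⟨a, Or.inl rfl⟩
  rcases hm with rfl | rfl
  · exact Or.inl (hmle b (Or.inr rfl))
  · exact Or.inr (hmle a (Or.inl rfl))

lemma mem_of_subset_of_ne {x y : ZFSet} (hy : IsUOrdinal U y) (hxtr : x.IsTransitive)
    (hsub : x ⊆ y) (hne : x ≠ y) : x ∈ y := by
  have hdne : Set.Nonempty {z : ZFSet | z ∈ y ∧ z ∉ x} := by
    by_contra h
    rw [Set.not_nonempty_iff_eq_empty] at h
    apply hne
    apply ZFSet.ext
    intro z
    refine ⟨fun hz => hsub hz, fun hz => ?_⟩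
    by_contra hzx
    exact Set.eq_empty_iff_forall_notMem.1 h z ⟨hz, hzx⟩
  obtain ⟨m, ⟨hmy, hmx⟩, hmin⟩ := ZFSet.mem_wf.has_min _ hdne
  have hxm : x = m := by
    apply ZFSet.ext
    intro z
    constructor
    · intro hz
      have hzy : z ∈ y := hsub hz
      rcases hy.comparable hzy hmy with h | h
      · rcases h with h | rfl
        · exact h
        · exact absurd hz hmx
      · rcases h with h | h
        · exact absurd (hxtr z hz h) hmx
        · exact absurd (h ▸ hz) hmx
    · intro hz
      have hzy : z ∈ y := hy.2.1 m hmy hz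
      by_contra hzx
      exact hmin z ⟨hzy, hzx⟩ hz
  rw [hxm]
  exact hmy

lemma IsUOrdinal.trichotomy {x y : ZFSet} (hx : IsUOrdinal U x) (hy : IsUOrdinal U y) :
    x ∈ y ∨ x = y ∨ y ∈ x := by
  by_cases h1 : x ∩ y = x
  · have hsub : x ⊆ y := fun z hz => (ZFSet.mem_inter.1 (by rw [h1]; exact hz)).2
    by_cases he : x = y
    · exact Or.inr (Or.inl he)
    · exact Or.inl (mem_of_subset_of_ne hy hx.2.1 hsub he)
  · by_cases h2 : x ∩ y = y
    · have hsub : y ⊆ x := fun z hz => (ZFSet.mem_inter.1 (by rw [h2]; exact hz)).1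
      by_cases he : y = x
      · exact Or.inr (Or.inl he.symm)
      · exact Or.inr (Or.inr (mem_of_subset_of_ne hx hy.2.1 hsub he))
    · exfalso
      have htr : (x ∩ y).IsTransitive := hx.2.1.inter hy.2.1
      have hmx : x ∩ y ∈ x :=
        mem_of_subset_of_ne hx htr (fun z hz => (ZFSet.mem_inter.1 hz).1) h1
      have hmy : x ∩ y ∈ y :=
        mem_of_subset_of_ne hy htr (fun z hz => (ZFSet.mem_inter.1 hz).2) h2
      exact ZFSet.mem_irrefl _ (ZFSet.mem_inter.2 ⟨hmx, hmy⟩)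

lemma IsUOrdinal.mem_ord (hU : IsUniverse U) {x y : ZFSet} (hx : IsUOrdinal U x)
    (hyx : y ∈ x) : IsUOrdinal U y := by
  have hyU : y ∈ U := hU.1 x hx.1 hyx
  have hysub : y ⊆ x := hx.2.1 y hyx
  have htrans : y.IsTransitive := by
    intro w hw z hz
    have hwx : w ∈ x := hysub hw
    have hzx : z ∈ x := hx.2.1 w hwx hz
    have h1 : meq z y :=
      hx.2.2.2.2.1 z hzx w hwx y hyx (Or.inl hz) (Or.inl hw)
    rcases h1 with h1 | rfl
    · exact h1
    · exact absurd hw (ZFSet.mem_asymm hz)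
  refine ⟨hyU, htrans, fun a _ => meq_refl a, fun a _ b _ => meq_antisymm,
    fun a ha b hb c hc => hx.2.2.2.2.1 a (hysub ha) b (hysub hb) c (hysub hc),
    fun S hS hSne => hx.2.2.2.2.2 S (fun z hz => hysub (hS hz)) hSne⟩

lemma isUOrdinal_of_forall (hU : IsUniverse U) {x : ZFSet} (hxU : x ∈ U)
    (htr : x.IsTransitive) (hall : ∀ y ∈ x, IsUOrdinal U y) : IsUOrdinal U x := by
  refine ⟨hxU, htr, fun a _ => meq_refl a, fun a _ b _ => meq_antisymm,
    fun a _ b _ c hc => meq_trans_of_transitive (hall c hc).2.1, ?_⟩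
  intro S hS hSne
  obtain ⟨m, hm, hmin⟩ := ZFSet.mem_wf.has_min S hSne
  refine ⟨m, hm, fun z hz => ?_⟩
  rcases (hall m (hS hm)).trichotomy (hall z (hS hz)) with h | h | h
  · exact Or.inl h
  · exact Or.inr h
  · exact absurd h (hmin z hz)

end Aux


section Core

variable {U : ZFSet}

lemma IsUniverse.repl_mem (hU : IsUniverse U) {B : ZFSet} (hB : B ∈ U) (f : ZFSet → ZFSet)
    (hf : ∀ b ∈ B, f b ∈ U) (X : ZFSet) (hX : ∀ z, z ∈ X ↔ ∃ b ∈ B, f b = z) : X ∈ U := by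
  have key : unionImage (fun b => ({f b} : ZFSet)) B = X := by
    ext z
    rw [mem_unionImage, hX]
    constructor
    · rintro ⟨b, hb, hz⟩
      rw [ZFSet.mem_singleton] at hz
      exact ⟨b, hb, hz.symm⟩
    · rintro ⟨b, hb, rfl⟩
      exact ⟨b, hb, ZFSet.mem_singleton.2 rfl⟩
  rw [← key]
  exact hU.2.2 B hB _ fun b hb => hU.singleton_mem (hf b hb)

lemma IsUniverse.mem_of_zf_equiv (hU : IsUniverse U) {X B : ZFSet} (hB : B ∈ U)
    (e : X.toSet ≃ B.toSet) (hXU : ∀ z ∈ X, z ∈ U) : X ∈ U := by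
  classical
  set f : ZFSet → ZFSet := fun b => if h : b ∈ B then ((e.symm ⟨b, h⟩ : X.toSet) : ZFSet) else ∅
    with hf
  refine hU.repl_mem hB f (fun b hb => ?_) X (fun z => ?_)
  · rw [hf]
    dsimp only
    rw [dif_pos hb]
    exact hXU _ (e.symm ⟨b, hb⟩).2
  · constructor
    · intro hz
      refine ⟨(e ⟨z, hz⟩ : ZFSet), (e ⟨z, hz⟩).2, ?_⟩
      rw [hf]
      dsimp only
      have hmem : ((e ⟨z, hz⟩ : B.toSet) : ZFSet) ∈ B := (e ⟨z, hz⟩).2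
      rw [dif_pos hmem]
      have : (⟨(e ⟨z, hz⟩ : ZFSet), hmem⟩ : B.toSet) = e ⟨z, hz⟩ := Subtype.ext rfl
      rw [this, Equiv.symm_apply_apply]
    · rintro ⟨b, hb, rfl⟩
      rw [hf]
      dsimp only
      rw [dif_pos hb]
      exact (e.symm ⟨b, hb⟩).2

lemma join_lemma (hU : IsUniverse U) {O : ZFSet} (hO : ∀ x, x ∈ O ↔ IsUOrdinal U x)
    {X : ZFSet} (hXO : X ⊆ O) (hXU : X ∈ U) :
    ∃ h : (ZFSet.sUnion X) ∪ X ∈ O,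
      IsIncJoin (fun a b : O.toSet => meq a.1 b.1)
        {a : O.toSet | a.1 ∈ X} ⟨(ZFSet.sUnion X) ∪ X, h⟩ := by
  set j := ZFSet.sUnion X ∪ X with hj
  have hjmem : ∀ z, z ∈ j ↔ (∃ w ∈ X, z ∈ w) ∨ z ∈ X := by
    intro z
    rw [hj, ZFSet.mem_union, ZFSet.mem_sUnion]
  have hXord : ∀ w ∈ X, IsUOrdinal U w := fun w hw => (hO w).1 (hXO hw)
  have hjU : j ∈ U := hU.union_mem (hU.sUnion_mem hXU) hXU
  have hjtr : j.IsTransitive := by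
    intro z hz w hw
    rcases (hjmem z).1 hz with ⟨v, hv, hzv⟩ | hzX
    · exact (hjmem w).2 (Or.inl ⟨v, hv, (hXord v hv).2.1 z hzv hw⟩)
    · exact (hjmem w).2 (Or.inl ⟨z, hzX, hw⟩)
  have hjord : IsUOrdinal U j := by
    refine isUOrdinal_of_forall hU hjU hjtr (fun z hz => ?_)
    rcases (hjmem z).1 hz with ⟨v, hv, hzv⟩ | hzX
    · exact (hXord v hv).mem_ord hU hzv
    · exact hXord z hzX
  have hjO : j ∈ O := (hO j).2 hjord
  refine ⟨hjO, fun a ha => ?_, fun c hc => ?_⟩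
  · exact ltR_subtype.2 ((hjmem a.1).2 (Or.inr ha))
  · have hXc : X ⊆ c.1 := fun z hz => ltR_subtype.1 (hc ⟨z, hXO hz⟩ hz)
    have hcord : IsUOrdinal U c.1 := (hO c.1).1 c.2
    have hsub : j ⊆ c.1 := by
      intro z hz
      rcases (hjmem z).1 hz with ⟨v, hv, hzv⟩ | hzX
      · exact hcord.2.1 v (hXc hv) hzv
      · exact hXc hzX
    by_cases he : j = c.1
    · exact Or.inr he
    · exact Or.inl (mem_of_subset_of_ne hcord hjtr hsub he)

end Core

theorem stmt_14 (U : ZFSet) (hU : IsUniverse U) (O : ZFSet) :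
    ((∀ x : ZFSet, x ∈ O ↔ IsUOrdinal U x) ↔
      (((U ≠ ∅ → ∅ ∈ O) ∧ O ⊆ U) ∧
        O.IsTransitive ∧
        IsOrdinalSystem U (fun a b : O.toSet => meq a.1 b.1))) ∧
    ((∀ x : ZFSet, x ∈ O ↔ IsUOrdinal U x) →
      ∀ X : ZFSet, X ∈ RestrictedPower U O →
        ∃ h : (ZFSet.sUnion X) ∪ X ∈ O,
          IsIncJoin (fun a b : O.toSet => meq a.1 b.1)
            {a : O.toSet | a.1 ∈ X} ⟨(ZFSet.sUnion X) ∪ X, h⟩) := by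
  classical
  have moreover : (∀ x : ZFSet, x ∈ O ↔ IsUOrdinal U x) →
      ∀ X : ZFSet, X ∈ RestrictedPower U O →
        ∃ h : (ZFSet.sUnion X) ∪ X ∈ O,
          IsIncJoin (fun a b : O.toSet => meq a.1 b.1) {a : O.toSet | a.1 ∈ X}
            ⟨(ZFSet.sUnion X) ∪ X, h⟩ := by
    intro hO X hX
    obtain ⟨hXO, B, hB, ⟨e⟩⟩ := hX
    have hXU : X ∈ U := hU.mem_of_zf_equiv hB e (fun z hz => ((hO z).1 (hXO hz)).1)
    exact join_lemma hU hO hXO hXU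
  refine ⟨⟨?_, ?_⟩, moreover⟩
  · -- forward direction
    intro hO
    have hOsubU : O ⊆ U := fun x hx => ((hO x).1 hx).1
    refine ⟨⟨?_, hOsubU⟩, ?_, ?_, ?_, ?_⟩
    · -- empty set
      intro hne
      refine (hO ∅).2 ⟨hU.empty_mem hne, ZFSet.isTransitive_empty,
        fun a _ => meq_refl a, fun a _ b _ => meq_antisymm,
        fun a ha => absurd ha (ZFSet.notMem_empty a), ?_⟩
      rintro S hS ⟨m, hm⟩
      exact absurd (hS hm) (ZFSet.notMem_empty m)
    · -- O transitive
      intro x hx z hz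
      exact (hO z).2 (((hO x).1 hx).mem_ord hU hz)
    · -- partial order
      exact { refl := fun a => meq_refl a.1
              trans := fun a b c hab hbc =>
                meq_trans_of_transitive ((hO c.1).1 c.2).2.1 hab hbc
              antisymm := fun a b hab hba => Subtype.ext (meq_antisymm hab hba) }
    · -- (O1)
      intro S hSne
      obtain ⟨y0, hy0⟩ := hSne
      set B := ZFSet.sep (fun z => ∀ a : O.toSet, a ∈ S → z ∈ a.1) y0.1 with hBdef
      have hBmem : ∀ z, z ∈ B ↔ z ∈ y0.1 ∧ ∀ a ∈ S, z ∈ a.1 := fun z => ZFSet.mem_sep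
      have hy0O : y0.1 ∈ O := y0.2
      have hBU : B ∈ U :=
        hU.mem_of_subset (fun z hz => ((hBmem z).1 hz).1) (hOsubU hy0O)
      have hmemB : ∀ a : O.toSet, a ∈ lowerComp (fun a b : O.toSet => meq a.1 b.1) S →
          a.1 ∈ B := by
        intro a ha
        exact (hBmem a.1).2 ⟨ltR_subtype.1 (ha y0 hy0), fun b hb => ltR_subtype.1 (ha b hb)⟩
      refine ⟨B, hBU, ⟨Equiv.ofBijective (fun a => ⟨a.1.1, hmemB a.1 a.2⟩) ⟨?_, ?_⟩⟩⟩
      · intro a b hab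
        have h0 := congrArg Subtype.val hab
        exact Subtype.ext (Subtype.ext h0)
      · rintro ⟨b, hb⟩
        have hbB : b ∈ B := hb
        have hbO : b ∈ O := (hO b).2 (((hO y0.1).1 hy0O).mem_ord hU ((hBmem b).1 hbB).1)
        refine ⟨⟨⟨b, hbO⟩, ?_⟩, rfl⟩
        intro y hy
        exact ltR_subtype.2 (((hBmem b).1 hbB).2 y hy)
    · -- (O2)
      intro S hSsmall
      obtain ⟨B, hBU, ⟨e⟩⟩ := hSsmall
      set f : ZFSet → ZFSet :=
        fun b => if h : b ∈ B then (((e.symm ⟨b, h⟩ : S) : O.toSet) : ZFSet) else ∅ with hfdef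
      set X' := unionImage (fun b => ({f b} : ZFSet)) B with hX'def
      have hX'mem : ∀ z, z ∈ X' ↔ ∃ b ∈ B, f b = z := by
        intro z
        rw [hX'def, mem_unionImage]
        constructor
        · rintro ⟨b, hb, hz⟩
          rw [ZFSet.mem_singleton] at hz
          exact ⟨b, hb, hz.symm⟩
        · rintro ⟨b, hb, rfl⟩
          exact ⟨b, hb, ZFSet.mem_singleton.2 rfl⟩
      have hfO : ∀ b ∈ B, f b ∈ O ∨ f b = ∅ := by
        intro b hb
        rw [hfdef]
        dsimp only
        rw [dif_pos hb]
        exact Or.inl ((e.symm ⟨b, hb⟩ : S).1.2)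
      have hX'U : X' ∈ U := by
        refine hU.2.2 B hBU _ (fun b hb => ?_)
        rcases hfO b hb with h | h
        · exact hU.singleton_mem (hOsubU h)
        · rw [h]
          exact hU.singleton_mem (hU.empty_mem (by rintro rfl; exact ZFSet.notMem_empty _ hBU))
      have char : ∀ z, z ∈ X' ↔ ∃ a : S, ((a : O.toSet) : ZFSet) = z := by
        intro z
        rw [hX'mem]
        constructor
        · rintro ⟨b, hb, rfl⟩
          refine ⟨e.symm ⟨b, hb⟩, ?_⟩
          rw [hfdef]
          dsimp only
          rw [dif_pos hb]
        · rintro ⟨a, rfl⟩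
          have hmem : ((e a : B.toSet) : ZFSet) ∈ B := (e a).2
          refine ⟨(e a : ZFSet), hmem, ?_⟩
          rw [hfdef]
          dsimp only
          rw [dif_pos hmem]
          have h2 : (⟨(e a : ZFSet), hmem⟩ : B.toSet) = e a := Subtype.ext rfl
          rw [h2, Equiv.symm_apply_apply]
      have hX'O : X' ⊆ O := by
        intro z hz
        obtain ⟨a, ha⟩ := (char z).1 hz
        rw [← ha]
        exact (a : O.toSet).2
      obtain ⟨h, hj⟩ := join_lemma hU hO hX'O hX'U
      have hset : {a : O.toSet | a.1 ∈ X'} = S := by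
        ext a
        simp only [Set.mem_setOf_eq]
        rw [char a.1]
        constructor
        · rintro ⟨a', ha'⟩
          have h3 : (a' : O.toSet) = a := Subtype.ext ha'
          rw [← h3]
          exact a'.2
        · intro ha
          exact ⟨⟨a, ha⟩, rfl⟩
      exact ⟨_, hset ▸ hj⟩
  · -- backward direction
    rintro ⟨⟨hemp, hOU⟩, hOtr, hPO, hO1, hO2⟩
    have part1 : ∀ x, x ∈ O → IsUOrdinal U x := by
      intro x
      induction x using ZFSet.inductionOn with
      | _ x IH =>
        intro hxO
        have hsubO : x ⊆ O := hOtr x hxO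
        have htr : x.IsTransitive := by
          intro y hy z hz
          have hyO : y ∈ O := hsubO hy
          have hzO : z ∈ O := hOtr y hyO hz
          have h3 := hPO.toIsPreorder.toIsTrans.trans (⟨z, hzO⟩ : O.toSet) ⟨y, hyO⟩
            ⟨x, hxO⟩ (Or.inl hz) (Or.inl hy)
          rcases h3 with h3 | h3
          · exact h3
          · exfalso
            rw [show z = x from h3] at hz
            exact ZFSet.mem_asymm hy hz
        exact isUOrdinal_of_forall hU (hOU hxO) htr (fun y hy => IH y hy (hsubO hy))
    have part2 : ∀ z, IsUOrdinal U z → z ∈ O := by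
      intro z
      induction z using ZFSet.inductionOn with
      | _ z IH =>
        intro hz
        have hsub : z ⊆ O := fun y hy => IH y hy (hz.mem_ord hU hy)
        have hsmall : SmallSet U {a : O.toSet | a.1 ∈ z} := by
          refine ⟨z, hz.1, ⟨Equiv.ofBijective (fun a => ⟨a.1.1, a.2⟩) ⟨?_, ?_⟩⟩⟩
          · intro a b hab
            have h0 := congrArg Subtype.val hab
            exact Subtype.ext (Subtype.ext h0)
          · rintro ⟨b, hb⟩
            exact ⟨⟨⟨b, hsub hb⟩, hb⟩, rfl⟩
        obtain ⟨b, hb⟩ := hO2 _ hsmall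
        have hzb : z ⊆ b.1 := fun y hy => ltR_subtype.1 (hb.1 ⟨y, hsub hy⟩ hy)
        have hbord : IsUOrdinal U b.1 := part1 b.1 b.2
        by_cases he : z = b.1
        · rw [he]
          exact b.2
        · exact hOtr b.1 b.2 (mem_of_subset_of_ne hbord hz.2.1 hzb he)
    intro x
    exact ⟨part1 x, part2 x⟩


end Paper
end

section
/- Let 𝒰 be a universe and (O, ≤) an ordinal system relative to 𝒰. Define the limit-successor system (O, ⋁, ⁺) where the partial function ⋁ assigns to each successor-closed I ∈ P_𝒰(O) its join, and the successor function is x ↦ x⁺. Then (O, ⋁, ⁺) is a 𝒰-counting system satisfying (C3), (C4) and (C5), its specialization preorder coincides with the order ≤ of O, and the closure of any I ∈ P_𝒰(O) is Ī = {⋁⁺I}^↧. Moreover, it is the unique 𝒰-counting system satisfying (C3)–(C5) whose specialization preorder is ≤. -/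
namespace Paper

variable {X : Type*}

/-- `I` is successor-closed: `s(I) ⊆ I`. -/
def SuccClosed (s : X → X) (I : Set X) : Prop := ∀ x ∈ I, s x ∈ I

/-- The domain of the limit function of a `𝒰`-counting system (axiom (C1)):
the successor-closed members of `P_𝒰(X)`. -/
def LDom (U : ZFSet) (s : X → X) : Set (Set X) :=
  {I | SuccClosed s I ∧ SmallSet U I}

/-- A subset `J` is closed when `s⁻¹(J) ⊆ J` and `A ⊆ J` whenever `L(A) ∈ J`. -/
def IsClosedSub (U : ZFSet) (s : X → X) (L : ∀ I ∈ LDom U s, X) (J : Set X) : Prop :=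
  (∀ x : X, s x ∈ J → x ∈ J) ∧
  (∀ A (h : A ∈ LDom U s), L A h ∈ J → A ⊆ J)

/-- The closure `Ī` of `I` in the topology of closed subsets: the intersection
of all closed subsets containing `I`. -/
def cl (U : ZFSet) (s : X → X) (L : ∀ I ∈ LDom U s, X) (I : Set X) : Set X :=
  {x | ∀ J : Set X, IsClosedSub U s L J → I ⊆ J → x ∈ J}

/-- `x ≤_s y`: `s^m(x) = y` for some `m ∈ ℕ`. -/
def leS (s : X → X) (x y : X) : Prop := ∃ m : ℕ, s^[m] x = y

/-- `x ≤_L y`: `x ∈ I` and `L(I) = y` for some `I ∈ dom L`. -/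
def leL (U : ZFSet) (s : X → X) (L : ∀ I ∈ LDom U s, X) (x y : X) : Prop :=
  ∃ I, ∃ h : I ∈ LDom U s, x ∈ I ∧ L I h = y

/-- The specialization preorder: `x ≤ y` iff `x ∈ cl {y}`. -/
def leSpec (U : ZFSet) (s : X → X) (L : ∀ I ∈ LDom U s, X) (x y : X) : Prop :=
  x ∈ cl U s L {y}

/-- Axiom (C2): the limit function only depends on the closure of its argument. -/
def C2 (U : ZFSet) (s : X → X) (L : ∀ I ∈ LDom U s, X) : Prop :=
  ∀ I J (hI : I ∈ LDom U s) (hJ : J ∈ LDom U s),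
    cl U s L I = cl U s L J → L I hI = L J hJ

/-- Axiom (C3): `s⁻¹{L(I)} = ∅` and `s(L(I)) ∉ I` for all `I ∈ dom L`. -/
def C3 (U : ZFSet) (s : X → X) (L : ∀ I ∈ LDom U s, X) : Prop :=
  ∀ I (h : I ∈ LDom U s), (∀ x : X, s x ≠ L I h) ∧ s (L I h) ∉ I

/-- Axiom (C4): `s` is injective, and `L(I) = L(J)` implies `Ī = J̄`. -/
def C4 (U : ZFSet) (s : X → X) (L : ∀ I ∈ LDom U s, X) : Prop :=
  Function.Injective s ∧
  ∀ I J (hI : I ∈ LDom U s) (hJ : J ∈ LDom U s),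
    L I hI = L J hJ → cl U s L I = cl U s L J

/-- Axiom (C5): the induction axiom. -/
def C5 (U : ZFSet) (s : X → X) (L : ∀ I ∈ LDom U s, X) : Prop :=
  ∀ J : Set X, SuccClosed s J →
    (∀ I (h : I ∈ LDom U s), I ⊆ J → L I h ∈ J) → J = Set.univ

section Aux

variable {O : Type*} [PartialOrder O] {U : ZFSet}

lemma ltR_iff {x y : O} : ltR (· ≤ ·) x y ↔ x < y := (lt_iff_le_and_ne).symm

lemma exists_min (hO : IsOrdinalSystem U ((· ≤ ·) : O → O → Prop))
    (S : Set O) (hS : S.Nonempty) : ∃ b ∈ S, ∀ y ∈ S, b ≤ y := by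
  obtain ⟨b, hb⟩ := hO.2.2 _ (hO.2.1 S hS)
  have hub : ∀ y ∈ S, b ≤ y := fun y hy => hb.2 y (fun d hd => hd y hy)
  have hbS : b ∈ S := by
    by_contra hbS
    have hbD : b ∈ lowerComp (· ≤ ·) S := fun y hy => ⟨hub y hy, fun h => hbS (h ▸ hy)⟩
    exact (hb.1 b hbD).2 rfl
  exact ⟨b, hbS, hub⟩

lemma total_le (hO : IsOrdinalSystem U ((· ≤ ·) : O → O → Prop)) (x y : O) :
    x ≤ y ∨ y ≤ x := by
  obtain ⟨b, hbS, hub⟩ := exists_min hO {x, y} ⟨x, Or.inl rfl⟩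
  rcases hbS with rfl | rfl
  · exact Or.inl (hub y (Or.inr rfl))
  · exact Or.inr (hub x (Or.inl rfl))

lemma le_of_not_ltR (hO : IsOrdinalSystem U ((· ≤ ·) : O → O → Prop)) {x y : O}
    (h : ¬ ltR (· ≤ ·) y x) : x ≤ y := by
  rcases total_le hO x y with h1 | h1
  · exact h1
  · rcases eq_or_ne y x with rfl | hne
    · exact le_refl _
    · exact absurd ⟨h1, hne⟩ h

lemma wf_lt (hO : IsOrdinalSystem U ((· ≤ ·) : O → O → Prop)) :
    WellFounded ((· < ·) : O → O → Prop) := by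
  rw [WellFounded.wellFounded_iff_has_min]
  intro s hs
  obtain ⟨b, hb, hub⟩ := exists_min hO s hs
  exact ⟨b, hb, fun x hx hlt => absurd (hub x hx) (not_le_of_gt hlt)⟩

variable {succ : O → O}

lemma lt_succ (hsucc : ∀ x : O, IsSuccOf (· ≤ ·) x (succ x)) (x : O) : x < succ x :=
  ltR_iff.mp ((hsucc x).1 x rfl)

lemma succ_le (hsucc : ∀ x : O, IsSuccOf (· ≤ ·) x (succ x)) {x c : O} (h : x < c) :
    succ x ≤ c := by
  refine (hsucc x).2 c (fun y hy => ?_)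
  rcases hy with rfl
  exact ltR_iff.mpr h

lemma lt_succ_iff (hO : IsOrdinalSystem U ((· ≤ ·) : O → O → Prop))
    (hsucc : ∀ x : O, IsSuccOf (· ≤ ·) x (succ x)) {x y : O} : x < succ y ↔ x ≤ y := by
  constructor
  · intro h
    by_contra hxy
    rcases total_le hO x y with h1 | h1
    · exact hxy h1
    · have hyx : y < x := lt_of_le_of_ne h1 (fun e => hxy e.ge)
      exact absurd (succ_le hsucc hyx) (not_le_of_gt h)
  · intro h
    exact lt_of_le_of_lt h (lt_succ hsucc y)

lemma incJoin_unique {S : Set O} {b c : O} (hb : IsIncJoin (· ≤ ·) S b)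
    (hc : IsIncJoin (· ≤ ·) S c) : b = c :=
  le_antisymm (hb.2 c hc.1) (hc.2 b hb.1)

lemma lowerComp_singleton (b : O) :
    lowerComp (· ≤ ·) ({b} : Set O) = {x : O | x < b} := by
  ext x
  constructor
  · intro h
    exact ltR_iff.mp (h b rfl)
  · intro h y hy
    rcases hy with rfl
    exact ltR_iff.mpr h

lemma incJoin_seg (hO : IsOrdinalSystem U ((· ≤ ·) : O → O → Prop)) (y : O) :
    IsIncJoin (· ≤ ·) {x : O | x < y} y := by
  constructor
  · intro w hw
    exact ltR_iff.mpr hw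
  · intro c hc
    refine le_of_not_ltR hO (fun hcy => ?_)
    exact absurd (hc c (ltR_iff.mp hcy)).2 (by simp)

lemma L_incJoin (hO : IsOrdinalSystem U ((· ≤ ·) : O → O → Prop))
    (hsucc : ∀ x : O, IsSuccOf (· ≤ ·) x (succ x))
    {L : ∀ I ∈ LDom U succ, O} (hL : ∀ I (h : I ∈ LDom U succ), IsJoin (· ≤ ·) I (L I h))
    (I : Set O) (h : I ∈ LDom U succ) : IsIncJoin (· ≤ ·) I (L I h) := by
  have hnotmem : L I h ∉ I := by
    intro hmem
    have h1 : succ (L I h) ∈ I := h.1 _ hmem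
    have h2 : succ (L I h) ≤ L I h := (hL I h).1 _ h1
    exact absurd h2 (not_le_of_gt (lt_succ hsucc _))
  constructor
  · intro y hy
    exact ⟨(hL I h).1 y hy, fun e => hnotmem (e ▸ hy)⟩
  · intro c hc
    exact (hL I h).2 c (fun y hy => (hc y hy).1)

lemma subset_cl {s : O → O} {L : ∀ I ∈ LDom U s, O} (I : Set O) : I ⊆ cl U s L I :=
  fun _ hx J _ hIJ => hIJ hx

lemma cl_isClosed {s : O → O} {L : ∀ I ∈ LDom U s, O} (I : Set O) :
    IsClosedSub U s L (cl U s L I) :=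
  ⟨fun x hx J hJ hIJ => hJ.1 x (hx J hJ hIJ),
   fun A hA hLA a ha J hJ hIJ => hJ.2 A hA (hLA J hJ hIJ) ha⟩

lemma down_closed (hO : IsOrdinalSystem U ((· ≤ ·) : O → O → Prop))
    (hsucc : ∀ x : O, IsSuccOf (· ≤ ·) x (succ x))
    {L : ∀ I ∈ LDom U succ, O} (hL : ∀ I (h : I ∈ LDom U succ), IsJoin (· ≤ ·) I (L I h))
    {J : Set O} (hJ : IsClosedSub U succ L J) :
    ∀ y ∈ J, ∀ x, x ≤ y → x ∈ J := by
  intro y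
  induction y using (wf_lt hO).induction with
  | _ y IH =>
    intro hyJ x hxy
    rcases eq_or_lt_of_le hxy with rfl | hlt
    · exact hyJ
    by_cases hsc : ∃ z, succ z = y
    · obtain ⟨z, rfl⟩ := hsc
      exact IH z (lt_succ hsucc z) (hJ.1 z hyJ) x ((lt_succ_iff hO hsucc).mp hlt)
    · have hA : {w : O | w < y} ∈ LDom U succ := by
        constructor
        · intro w hw
          exact lt_of_le_of_ne (succ_le hsucc hw) (fun e => hsc ⟨w, e⟩)
        · have := hO.2.1 {y} ⟨y, rfl⟩
          rwa [lowerComp_singleton] at this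
      have hLA : L _ hA = y :=
        incJoin_unique (L_incJoin hO hsucc hL _ hA) (incJoin_seg hO y)
      exact hJ.2 _ hA (by rw [hLA]; exact hyJ) hlt

lemma cl_eq_seg (hO : IsOrdinalSystem U ((· ≤ ·) : O → O → Prop))
    (hsucc : ∀ x : O, IsSuccOf (· ≤ ·) x (succ x))
    {L : ∀ I ∈ LDom U succ, O} (hL : ∀ I (h : I ∈ LDom U succ), IsJoin (· ≤ ·) I (L I h))
    (I : Set O) (b : O) (hb : IsIncJoin (· ≤ ·) I b) :
    cl U succ L I = lowerComp (· ≤ ·) ({b} : Set O) := by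
  rw [lowerComp_singleton]
  apply Set.Subset.antisymm
  · intro x hx
    refine hx {w : O | w < b} ⟨?_, ?_⟩ ?_
    · intro w hw
      exact lt_trans (lt_succ hsucc w) hw
    · intro A hA hLA a ha
      exact lt_trans (ltR_iff.mp ((L_incJoin hO hsucc hL A hA).1 a ha)) hLA
    · intro y hy
      exact ltR_iff.mp (hb.1 y hy)
  · intro x hx J hJ hIJ
    have hex : ∃ y ∈ I, x ≤ y := by
      by_contra hcon
      push_neg at hcon
      have hxu : x ∈ upperComp (· ≤ ·) I := by
        intro y hy
        rcases total_le hO x y with h1 | h1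
        · exact absurd h1 (hcon y hy)
        · exact ⟨h1, fun e => hcon y hy e.ge⟩
      exact absurd (hb.2 x hxu) (not_le_of_gt hx)
    obtain ⟨y, hyI, hxy⟩ := hex
    exact down_closed hO hsucc hL hJ y (hIJ hyI) x hxy

lemma leSpec_iff (hO : IsOrdinalSystem U ((· ≤ ·) : O → O → Prop))
    (hsucc : ∀ x : O, IsSuccOf (· ≤ ·) x (succ x))
    {L : ∀ I ∈ LDom U succ, O} (hL : ∀ I (h : I ∈ LDom U succ), IsJoin (· ≤ ·) I (L I h))
    (x y : O) : leSpec U succ L x y ↔ x ≤ y := by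
  constructor
  · intro h
    refine h {w : O | w ≤ y} ⟨?_, ?_⟩ ?_
    · intro w hw
      exact le_trans (le_of_lt (lt_succ hsucc w)) hw
    · intro A hA hLA a ha
      exact le_trans ((L_incJoin hO hsucc hL A hA).1 a ha).1 hLA
    · intro z hz
      rcases hz with rfl
      exact le_refl _
  · intro h J hJ hyJ
    exact down_closed hO hsucc hL hJ y (hyJ rfl) x h

section Primed

variable {s : O → O} {L : ∀ I ∈ LDom U s, O}

lemma self_le_s (hspec : ∀ x y : O, leSpec U s L x y ↔ x ≤ y) (x : O) : x ≤ s x :=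
  (hspec x (s x)).mp (fun J hJ hsub => hJ.1 x (hsub rfl))

lemma mem_le_L (hspec : ∀ x y : O, leSpec U s L x y ↔ x ≤ y)
    {I : Set O} (h : I ∈ LDom U s) {a : O} (ha : a ∈ I) : a ≤ L I h :=
  (hspec a _).mp (fun J hJ hsub => hJ.2 I h (hsub rfl) ha)

lemma s_ne_self (hC3 : C3 U s L) (hC4 : C4 U s L) (hC5 : C5 U s L) (x : O) : s x ≠ x := by
  intro hfix
  have huniv : ({z : O | z ≠ x}) = Set.univ := by
    apply hC5
    · intro z hz he
      exact hz (hC4.1 (he.trans hfix.symm))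
    · intro I hI _ he
      exact (hC3 I hI).1 x (hfix.trans he.symm)
  exact (huniv ▸ (Set.mem_univ x : x ∈ Set.univ)) rfl

lemma lt_s (hC3 : C3 U s L) (hC4 : C4 U s L) (hC5 : C5 U s L)
    (hspec : ∀ x y : O, leSpec U s L x y ↔ x ≤ y) (x : O) : x < s x :=
  lt_of_le_of_ne (self_le_s hspec x) (fun e => s_ne_self hC3 hC4 hC5 x e.symm)

lemma s_min (hC3 : C3 U s L) (hC4 : C4 U s L) (hC5 : C5 U s L)
    (hspec : ∀ x y : O, leSpec U s L x y ↔ x ≤ y) {x c : O} (h : x < c) : s x ≤ c := by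
  have hx : x ∈ cl U s L {c} := (hspec x c).mpr h.le
  have hK : x ∈ {w : O | w = c ∨ s w ≤ c} := by
    refine hx _ ⟨?_, ?_⟩ ?_
    · intro w hw
      rcases hw with he | hle
      · exact Or.inr he.le
      · exact Or.inr (le_trans (self_le_s hspec (s w)) hle)
    · intro A hA hLA a ha
      have h1 : s a ≤ L A hA := mem_le_L hspec hA (hA.1 a ha)
      rcases hLA with he | hle
      · exact Or.inr (he ▸ h1)
      · exact Or.inr (le_trans h1 (le_trans (self_le_s hspec _) hle))
    · intro z hz
      exact Or.inl hz
  rcases hK with rfl | hle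
  · exact absurd h (lt_irrefl x)
  · exact hle

end Primed

end Aux

theorem stmt_19 {O : Type*} [PartialOrder O] (U : ZFSet) (hU : IsUniverse U)
    (hO : IsOrdinalSystem U ((· ≤ ·) : O → O → Prop))
    (succ : O → O) (hsucc : ∀ x : O, IsSuccOf (· ≤ ·) x (succ x))
    (L : ∀ I ∈ LDom U succ, O) (hL : ∀ I (h : I ∈ LDom U succ), IsJoin (· ≤ ·) I (L I h)) :
    (C2 U succ L ∧ C3 U succ L ∧ C4 U succ L ∧ C5 U succ L) ∧
    (∀ x y : O, leSpec U succ L x y ↔ x ≤ y) ∧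
    (∀ I : Set O, SmallSet U I → ∀ b : O, IsIncJoin (· ≤ ·) I b →
      cl U succ L I = lowerComp (· ≤ ·) ({b} : Set O)) ∧
    (∀ (s' : O → O) (L' : ∀ I ∈ LDom U s', O),
      C2 U s' L' → C3 U s' L' → C4 U s' L' → C5 U s' L' →
      (∀ x y : O, leSpec U s' L' x y ↔ x ≤ y) →
      (∀ x : O, s' x = succ x) ∧
      (∀ I (h' : I ∈ LDom U s') (h : I ∈ LDom U succ), L' I h' = L I h)) := by
  have seg_inj : ∀ a b : O,
      lowerComp (· ≤ ·) ({a} : Set O) = lowerComp (· ≤ ·) ({b} : Set O) → a = b := by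
    intro a b h
    by_contra hne
    rw [lowerComp_singleton, lowerComp_singleton] at h
    rcases total_le hO a b with h1 | h1
    · have : a ∈ {x : O | x < b} := lt_of_le_of_ne h1 hne
      rw [← h] at this
      exact absurd (this : a < a) (lt_irrefl a)
    · have : b ∈ {x : O | x < a} := lt_of_le_of_ne h1 (Ne.symm hne)
      rw [h] at this
      exact absurd (this : b < b) (lt_irrefl b)
  have hclI : ∀ I (h : I ∈ LDom U succ),
      cl U succ L I = lowerComp (· ≤ ·) ({L I h} : Set O) :=
    fun I h => cl_eq_seg hO hsucc hL I _ (L_incJoin hO hsucc hL I h)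
  refine ⟨⟨?_, ?_, ?_, ?_⟩, leSpec_iff hO hsucc hL, fun I _ b hb => cl_eq_seg hO hsucc hL I b hb, ?_⟩
  · -- C2
    intro I J hI hJ hclEq
    exact seg_inj _ _ ((hclI I hI).symm.trans (hclEq.trans (hclI J hJ)))
  · -- C3
    intro I h
    have hm := L_incJoin hO hsucc hL I h
    constructor
    · intro x hx
      have hxm : x < L I h := hx ▸ lt_succ hsucc x
      by_cases hxu : x ∈ upperComp (· ≤ ·) I
      · exact absurd (hm.2 x hxu) (not_le_of_gt hxm)
      · have hex : ∃ y ∈ I, ¬ ltR (· ≤ ·) y x := by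
          by_contra hcon
          push_neg at hcon
          exact hxu hcon
        obtain ⟨y, hyI, hy⟩ := hex
        have hxy : x ≤ y := le_of_not_ltR hO hy
        have h2 : succ y < L I h := ltR_iff.mp (hm.1 _ (h.1 y hyI))
        have h3 : succ x ≤ succ y := succ_le hsucc (lt_of_le_of_lt hxy (lt_succ hsucc y))
        rw [hx] at h3
        exact absurd h3 (not_le_of_gt h2)
    · intro hmem
      have h1 : succ (L I h) < L I h := ltR_iff.mp (hm.1 _ hmem)
      exact absurd h1 (not_lt_of_ge (le_of_lt (lt_succ hsucc _)))
  · -- C4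
    constructor
    · intro a b hab
      by_contra hne
      rcases total_le hO a b with h1 | h1
      · have : succ a ≤ b := succ_le hsucc (lt_of_le_of_ne h1 hne)
        rw [hab] at this
        exact absurd this (not_le_of_gt (lt_succ hsucc b))
      · have : succ b ≤ a := succ_le hsucc (lt_of_le_of_ne h1 (Ne.symm hne))
        rw [← hab] at this
        exact absurd this (not_le_of_gt (lt_succ hsucc a))
    · intro I J hI hJ hLe
      rw [hclI I hI, hclI J hJ, hLe]
  · -- C5
    intro J hJsc hJL
    by_contra hne
    obtain ⟨x, hxc, hmin⟩ := exists_min hO Jᶜ (Set.nonempty_compl.mpr hne)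
    have hsub : {w : O | w < x} ⊆ J := by
      intro z hz
      by_contra hzJ
      exact absurd (hmin z hzJ) (not_le_of_gt hz)
    have hA : {w : O | w < x} ∈ LDom U succ := by
      constructor
      · intro w hw
        refine lt_of_le_of_ne (succ_le hsucc hw) (fun e => ?_)
        exact hxc (e ▸ hJsc w (hsub hw))
      · have := hO.2.1 {x} ⟨x, rfl⟩
        rwa [lowerComp_singleton] at this
    have hLA : L _ hA = x :=
      incJoin_unique (L_incJoin hO hsucc hL _ hA) (incJoin_seg hO x)
    exact hxc (hLA ▸ hJL _ hA hsub)
  · -- uniqueness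
    intro s' L' hC2' hC3' hC4' hC5' hspec'
    constructor
    · intro x
      exact le_antisymm (s_min hC3' hC4' hC5' hspec' (lt_succ hsucc x))
        (succ_le hsucc (lt_s hC3' hC4' hC5' hspec' x))
    · intro I h' h
      have hm := L_incJoin hO hsucc hL I h
      have hnotmem : L' I h' ∉ I := by
        intro hmem
        exact (hC3' I h').2 (h'.1 _ hmem)
      have hub : ∀ y ∈ I, y < L' I h' :=
        fun y hy => lt_of_le_of_ne (mem_le_L hspec' h' hy) (fun e => hnotmem (e ▸ hy))
      have hbm : L I h ≤ L' I h' := hm.2 _ (fun y hy => ltR_iff.mpr (hub y hy))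
      have hclsub : cl U s' L' I ⊆ {w : O | w < L I h} := by
        intro w hw
        have hwD : w ∈ {v : O | ∃ y ∈ I, v ≤ y} := by
          refine hw _ ⟨?_, ?_⟩ (fun y hy => ⟨y, hy, le_refl y⟩)
          · rintro v ⟨y, hy, hle⟩
            exact ⟨y, hy, le_trans (self_le_s hspec' v) hle⟩
          · rintro A hA ⟨y, hy, hle⟩ a ha
            exact ⟨y, hy, le_trans (mem_le_L hspec' hA ha) hle⟩
        obtain ⟨y, hyI, hvy⟩ := hwD
        exact lt_of_le_of_lt hvy (ltR_iff.mp (hm.1 y hyI))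
      have hS : IsClosedSub U s' L' (cl U s' L' I ∪ {L' I h'}) := by
        constructor
        · intro w hw
          rcases hw with hw | hw
          · exact Or.inl ((cl_isClosed I).1 w hw)
          · exact absurd hw ((hC3' I h').1 w)
        · intro A hA hLA a ha
          rcases hLA with hLA | hLA
          · exact Or.inl ((cl_isClosed I).2 A hA hLA ha)
          · have hEq : cl U s' L' A = cl U s' L' I := hC4'.2 A I hA h' hLA
            exact Or.inl (hEq ▸ subset_cl A ha)
      refine le_antisymm ?_ hbm
      by_contra hne2
      have hlt : L I h < L' I h' := lt_of_le_of_ne hbm (fun e => hne2 e.ge)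
      have hbK : L I h ∈ cl U s' L' I ∪ {L' I h'} :=
        ((hspec' _ _).mpr hlt.le) _ hS (fun z hz => Or.inr hz)
      rcases hbK with hbK | hbK
      · exact absurd (hclsub hbK) (lt_irrefl _)
      · exact (ne_of_lt hlt) hbK


end Paper
end
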